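/- arXiv:1512.06429 — 3 statements merged into one kernel-verified Lean document; each statement's English description precedes it below -/
import Mathlib

section
/- Let U be an integer-valued random variable with finite mean absolute value E|U|. Then H(U) ≤ (E|U| + 1)·h_b(1/(E|U|+1)) + log 2, where h_b is the binary entropy function in nats. -/
/-!
Gibbs' inequality bounds the entropy of the law `p` of `U` by its cross entropy against the
two-sided geometric distribution `q n = θ ^ |n| * (1 - θ) / (1 + θ)`, which is
`log ((1 + θ) / (1 - θ)) + E|U| * log (1 / θ)`. For `a = E|U| > 0` the choice `θ = a / (a + 1)`
turns this into `log (2a + 1) + a log ((a + 1) / a) ≤ log 2 + (a + 1) h_b (1 / (a + 1))`.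
-/

open MeasureTheory Real

/-- Shannon entropy (in nats) of an integer-valued random variable. -/
noncomputable def intEntropy {Ω : Type*} [MeasurableSpace Ω] (μ : Measure Ω) (U : Ω → ℤ) : ℝ :=
  ∑' n : ℤ, Real.negMulLog ((μ.map U) {n}).toReal

theorem hasSum_integral_countable {X E : Type*} [MeasurableSpace X] [Countable X]
    [MeasurableSingletonClass X] [NormedAddCommGroup E] [NormedSpace ℝ E] [CompleteSpace E]
    {μ : Measure X} {f : X → E} (hf : Integrable f μ) :
    HasSum (fun x ↦ μ.real {x} • f x) (∫ x, f x ∂μ) := by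
  rw [← Measure.sum_smul_dirac μ] at hf ⊢
  convert hasSum_integral_measure hf using 2 with x
  rw [integral_smul_measure, integral_dirac, Measure.sum_smul_dirac, measureReal_def]

theorem negMulLog_le_mul_neg_log_add_sub {p q : ℝ} (hp : 0 ≤ p) (hq : 0 < q) :
    negMulLog p ≤ p * -log q + (q - p) := by
  rcases hp.eq_or_lt with rfl | hp
  · simpa using hq.le
  have hlog : log q - log p ≤ q / p - 1 := by
    rw [← log_div hq.ne' hp.ne']
    exact log_le_sub_one_of_pos (div_pos hq hp)
  have := mul_le_mul_of_nonneg_left hlog hp.le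
  rw [mul_sub, mul_sub, mul_div_cancel₀ _ hp.ne', mul_one] at this
  rw [negMulLog]
  linarith

theorem tsum_negMulLog_le_of_hasSum {ι : Type*} {p q : ι → ℝ} {s : ℝ} (hp₀ : ∀ i, 0 ≤ p i)
    (hp : HasSum p 1) (hq₀ : ∀ i, 0 < q i) (hq : HasSum q 1)
    (hs : HasSum (fun i ↦ p i * -log (q i)) s) :
    ∑' i, negMulLog (p i) ≤ s := by
  have hbound : HasSum (fun i ↦ p i * -log (q i) + (q i - p i)) s := by
    simpa using hs.add (hq.sub hp)
  have hp₁ : ∀ i, p i ≤ 1 := fun i ↦ hp.summable.le_tsum i (fun j _ ↦ hp₀ j) |>.trans_eq hp.tsum_eq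
  have hle : ∀ i, negMulLog (p i) ≤ p i * -log (q i) + (q i - p i) :=
    fun i ↦ negMulLog_le_mul_neg_log_add_sub (hp₀ i) (hq₀ i)
  have hsum : Summable fun i ↦ negMulLog (p i) :=
    .of_nonneg_of_le (fun i ↦ negMulLog_nonneg (hp₀ i) (hp₁ i)) hle hbound.summable
  exact hasSum_le hle hsum.hasSum hbound

theorem hasSum_pow_natAbs {θ : ℝ} (hθ₀ : 0 ≤ θ) (hθ₁ : θ < 1) :
    HasSum (fun n : ℤ ↦ θ ^ n.natAbs) ((1 + θ) / (1 - θ)) := by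
  have hgeo := hasSum_geometric_of_lt_one hθ₀ hθ₁
  have hpos : HasSum (fun n : ℕ ↦ θ ^ (n : ℤ).natAbs) (1 - θ)⁻¹ := by simpa using hgeo
  have hneg : HasSum (fun n : ℕ ↦ θ ^ (-(n + 1 : ℤ)).natAbs) (θ * (1 - θ)⁻¹) := by
    have hidx (n : ℕ) : (-(n + 1 : ℤ)).natAbs = n + 1 := by omega
    simpa only [hidx, pow_succ'] using hgeo.mul_left θ
  convert HasSum.of_nat_of_neg_add_one (f := fun n : ℤ ↦ θ ^ n.natAbs) hpos hneg using 1
  field_simp [(sub_pos.2 hθ₁).ne']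

theorem tsum_negMulLog_le_of_hasSum_mul_abs {p : ℤ → ℝ} {a θ : ℝ} (hp₀ : ∀ n, 0 ≤ p n)
    (hp : HasSum p 1) (ha : HasSum (fun n ↦ p n * |(n : ℝ)|) a) (hθ₀ : 0 < θ) (hθ₁ : θ < 1) :
    ∑' n, negMulLog (p n) ≤ log ((1 + θ) / (1 - θ)) + a * -log θ := by
  set c := (1 + θ) / (1 - θ)
  have hc : 0 < c := div_pos (by linarith) (by linarith)
  have hq : HasSum (fun n : ℤ ↦ θ ^ n.natAbs / c) 1 := by
    rw [← div_self hc.ne']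
    exact (hasSum_pow_natAbs hθ₀.le hθ₁).div_const c
  have hlog (n : ℤ) : -log (θ ^ n.natAbs / c) = log c + |(n : ℝ)| * -log θ := by
    rw [log_div (pow_pos hθ₀ _).ne' hc.ne', log_pow, Nat.cast_natAbs, Int.cast_abs]
    ring
  refine tsum_negMulLog_le_of_hasSum hp₀ hp (fun n ↦ div_pos (pow_pos hθ₀ _) hc) hq ?_
  simpa only [hlog, mul_add, ← mul_assoc, one_mul] using
    (hp.mul_right (log c)).add (ha.mul_right (-log θ))

theorem mul_binEntropy_inv_add_one {a : ℝ} (ha : 0 < a) :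
    (a + 1) * binEntropy (1 / (a + 1)) = log (a + 1) + a * log ((a + 1) / a) := by
  have ha₁ : 0 < a + 1 := by linarith
  have hcompl : 1 - 1 / (a + 1) = a / (a + 1) := by field_simp; ring
  rw [binEntropy, hcompl, one_div, inv_inv, inv_div]
  field_simp

theorem tsum_negMulLog_le_mul_binEntropy_add_log_two {p : ℤ → ℝ} {a : ℝ} (hp₀ : ∀ n, 0 ≤ p n)
    (hp : HasSum p 1) (ha : HasSum (fun n ↦ p n * |(n : ℝ)|) a) :
    ∑' n, negMulLog (p n) ≤ (a + 1) * binEntropy (1 / (a + 1)) + log 2 := by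
  have ha₀ : 0 ≤ a := ha.nonneg fun n ↦ mul_nonneg (hp₀ n) (abs_nonneg _)
  rcases ha₀.eq_or_lt with rfl | ha₀
  · -- `θ = 1 / 3` makes the geometric bound exactly `log 2`.
    have := tsum_negMulLog_le_of_hasSum_mul_abs hp₀ hp ha (θ := 1 / 3) (by norm_num) (by norm_num)
    norm_num at this ⊢
    exact this
  have ha₁ : 0 < a + 1 := by linarith
  have hθ : (1 + a / (a + 1)) / (1 - a / (a + 1)) = 2 * a + 1 := by field_simp; ring
  calc ∑' n, negMulLog (p n)
      ≤ log (2 * a + 1) + a * log ((a + 1) / a) := by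
        have := tsum_negMulLog_le_of_hasSum_mul_abs hp₀ hp ha (div_pos ha₀ ha₁)
          ((div_lt_one ha₁).2 (by linarith))
        rwa [hθ, ← log_inv, inv_div] at this
    _ ≤ log 2 + log (a + 1) + a * log ((a + 1) / a) := by
        rw [← log_mul two_ne_zero ha₁.ne']
        gcongr
        linarith
    _ = (a + 1) * binEntropy (1 / (a + 1)) + log 2 := by
        rw [mul_binEntropy_inv_add_one ha₀]
        ring

theorem entropy_le_of_abs_mean {Ω : Type*} [MeasurableSpace Ω] (μ : Measure Ω)
    [IsProbabilityMeasure μ] (U : Ω → ℤ) (hU : Measurable U)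
    (hint : Integrable (fun ω => |(U ω : ℝ)|) μ) :
    intEntropy μ U ≤
      ((∫ ω, |(U ω : ℝ)| ∂μ) + 1) * Real.binEntropy (1 / ((∫ ω, |(U ω : ℝ)| ∂μ) + 1))
        + Real.log 2 := by
  set ν := μ.map U
  have : IsProbabilityMeasure ν := Measure.isProbabilityMeasure_map hU.aemeasurable
  have hp : HasSum (fun n ↦ ν.real {n}) 1 := by
    simpa using hasSum_integral_countable (integrable_const (1 : ℝ) (μ := ν))
  have hmeas : AEStronglyMeasurable (fun n : ℤ ↦ |(n : ℝ)|) ν := .of_discrete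
  have ha : HasSum (fun n ↦ ν.real {n} * |(n : ℝ)|) (∫ ω, |(U ω : ℝ)| ∂μ) := by
    rw [← integral_map hU.aemeasurable hmeas]
    exact hasSum_integral_countable ((integrable_map_measure hmeas hU.aemeasurable).2 hint)
  exact tsum_negMulLog_le_mul_binEntropy_add_log_two (fun _ ↦ measureReal_nonneg) hp ha
end

section
/- Let X be a real random variable with E[X²] = 1, E[X] = 0, and let Y = √γ·X + Z with Z ~ N(0,1) independent of X, γ > 0. Let φ_X be the characteristic function of X and suppose E|f_M(Y) − f_L(Y)|² ≤ ε where f_M(y) = E[X|Y=y] and f_L(y) = √γ·y/(1+γ). Then for all u ∈ ℝ, e^{−u²/(2γ)}·|φ_X'(u) + u·φ_X(u)| ≤ (1+γ)·√ε. -/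
/-!
Put `t = u / √γ`. Since `E[X | Y] = g(Y)` and `e^{itY}` is a bounded function of `Y`,
`E[e^{itY} (g(Y) - f_L(Y))] = E[e^{itY} (X - f_L(Y))]`. Writing `Y = √γ X + Z` and using
independence, the right-hand side factors into moments of `X` at frequency `u` times the Gaussian
`E[e^{itZ}] = e^{-t²/2}` and `E[Z e^{itZ}] = i t e^{-t²/2}`; the result is
`-i e^{-u²/(2γ)} (φ_X'(u) + u φ_X(u)) / (1 + γ)`. The left-hand side is at most
`E|g(Y) - f_L(Y)| ≤ √ε` in modulus.
-/

open MeasureTheory ProbabilityTheory Real Complex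
open scoped NNReal

noncomputable def charFun (P : Measure ℝ) (t : ℝ) : ℂ :=
  ∫ x, Complex.exp (Complex.I * t * x) ∂P

lemma charFun_eq_measureTheory_charFun (P : Measure ℝ) :
    _root_.charFun P = MeasureTheory.charFun P := by
  ext t
  simp only [_root_.charFun, charFun_apply_real, mul_comm I, mul_assoc]

lemma deriv_charFun_of_integrable {P : Measure ℝ} [IsFiniteMeasure P]
    (hP : Integrable id P) (t : ℝ) :
    deriv (MeasureTheory.charFun P) t = I * ∫ x, x * cexp (t * x * I) ∂P := by
  simpa using iteratedDeriv_charFun (n := 1) (t := t)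
    (by simpa using memLp_one_iff_integrable.2 hP)

lemma integral_mul_cexp_mul_I_gaussianReal (m : ℝ) (v : ℝ≥0) (t : ℝ) :
    ∫ x, x * cexp (t * x * I) ∂(gaussianReal m v)
      = (m + v * t * I) * MeasureTheory.charFun (gaussianReal m v) t := by
  have hderiv : HasDerivAt (MeasureTheory.charFun (gaussianReal m v))
      ((m * I - v * t) * MeasureTheory.charFun (gaussianReal m v) t) t := by
    rw [funext charFun_gaussianReal]
    convert ((((hasDerivAt_id (t : ℂ)).mul_const (m * I)).sub
      (((hasDerivAt_id (t : ℂ)).pow 2).const_mul (v / 2 : ℂ))).cexp).comp_ofReal using 1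
    · ext s
      simp only [id_eq, Pi.pow_apply, Pi.sub_apply]
      ring_nf
    · simp only [id_eq, Pi.pow_apply, Pi.sub_apply, one_mul, Nat.cast_ofNat,
        Nat.add_one_sub_one, pow_one, mul_one]
      ring_nf
  have h := deriv_charFun_of_integrable
    ((memLp_id_gaussianReal (μ := m) (v := v) 1).integrable le_rfl) t
  rw [hderiv.deriv] at h
  apply mul_left_cancel₀ I_ne_zero
  rw [← h]
  linear_combination -(MeasureTheory.charFun (gaussianReal m v) t * v * t) * I_sq

theorem integral_condExp_smul_of_bound {Ω : Type*} {m m₀ : MeasurableSpace Ω} {μ : Measure Ω}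
    [IsFiniteMeasure μ] (hm : m ≤ m₀) {E : Type*} [NormedAddCommGroup E] [NormedSpace ℝ E]
    [CompleteSpace E] {c : Ω → E} (hc : StronglyMeasurable[m] c) {C : ℝ}
    (hC : ∀ᵐ ω ∂μ, ‖c ω‖ ≤ C) {f : Ω → ℝ} (hf : Integrable f μ) :
    ∫ ω, μ[f | m] ω • c ω ∂μ = ∫ ω, f ω • c ω ∂μ :=
  calc ∫ ω, μ[f | m] ω • c ω ∂μ = ∫ ω, μ[fun ω => f ω • c ω | m] ω ∂μ :=
        integral_congr_ae (condExp_stronglyMeasurable_bilin_of_bound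
          (ContinuousLinearMap.lsmul ℝ ℝ).flip hm hc hf C hC).symm
    _ = ∫ ω, f ω • c ω ∂μ := integral_condExp hm

section

variable {Ω : Type*} [MeasurableSpace Ω] {μ : Measure Ω} {X Z : Ω → ℝ}

lemma memLp_of_map_eq_gaussianReal (hZ : Measurable Z) {m : ℝ} {v : ℝ≥0}
    (hZlaw : μ.map Z = gaussianReal m v) (p : ℝ≥0) : MemLp Z p μ := by
  have h : MemLp id p (μ.map Z) := hZlaw ▸ memLp_id_gaussianReal p
  exact (memLp_map_measure_iff aestronglyMeasurable_id hZ.aemeasurable).1 h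

lemma charFun_map_apply (hX : Measurable X) (s : ℝ) :
    MeasureTheory.charFun (μ.map X) s = ∫ ω, cexp (s * X ω * I) ∂μ := by
  rw [charFun_apply_real, integral_map hX.aemeasurable (by fun_prop)]

lemma ProbabilityTheory.IndepFun.integral_mul_cexp_mul_add (hXZ : IndepFun X Z μ)
    (hX : Measurable X) (hZ : Measurable Z) {F G : ℝ → ℂ} (hF : Measurable F)
    (hG : Measurable G) (a t : ℝ) :
    ∫ ω, F (X ω) * G (Z ω) * cexp (t * (a * X ω + Z ω : ℝ) * I) ∂μ
      = (∫ ω, F (X ω) * cexp ((a * t : ℝ) * X ω * I) ∂μ)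
        * ∫ ω, G (Z ω) * cexp (t * Z ω * I) ∂μ := by
  have hsplit : ∀ ω, F (X ω) * G (Z ω) * cexp (t * (a * X ω + Z ω : ℝ) * I)
      = F (X ω) * cexp ((a * t : ℝ) * X ω * I) * (G (Z ω) * cexp (t * Z ω * I)) := by
    intro ω
    rw [mul_mul_mul_comm, ← Complex.exp_add]
    push_cast
    ring_nf
  simp_rw [hsplit]
  exact hXZ.integral_fun_comp_mul_comp (f := fun x : ℝ => F x * cexp ((a * t : ℝ) * x * I))
    (g := fun z : ℝ => G z * cexp (t * z * I)) hX.aemeasurable hZ.aemeasurable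
    (by fun_prop) (by fun_prop)

theorem integral_sub_linear_mul_cexp_gaussian_channel [IsProbabilityMeasure μ]
    (hX : Measurable X) (hZ : Measurable Z) (hXZ : IndepFun X Z μ)
    (hZlaw : μ.map Z = gaussianReal 0 1) (hX1 : Integrable X μ) {a : ℝ} {Y : Ω → ℝ}
    (hY : Y = fun ω => a * X ω + Z ω) (t : ℝ) :
    ∫ ω, ((X ω - a * Y ω / (1 + a ^ 2) : ℝ) : ℂ) * cexp (t * Y ω * I) ∂μ
      = -I * (Real.exp (-t ^ 2 / 2) / (1 + a ^ 2) : ℝ)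
        * (deriv (_root_.charFun (μ.map X)) (a * t)
          + (a * t : ℝ) * _root_.charFun (μ.map X) (a * t)) := by
  subst hY
  beta_reduce
  have hZ1 : Integrable Z μ := (memLp_of_map_eq_gaussianReal hZ hZlaw 1).integrable le_rfl
  set ψ := cexp (-t ^ 2 / 2)
  have hgauss : MeasureTheory.charFun (μ.map Z) t = ψ := by
    simp only [hZlaw, charFun_gaussianReal, ψ]
    push_cast
    ring_nf
  have hgauss' : ∫ ω, (Z ω : ℂ) * cexp (t * Z ω * I) ∂μ = t * I * ψ := by
    rw [← integral_map hZ.aemeasurable (f := fun z : ℝ => (z : ℂ) * cexp (t * z * I))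
      (by fun_prop), hZlaw, integral_mul_cexp_mul_I_gaussianReal, ← hZlaw, hgauss]
    push_cast
    ring
  have hXpart := hXZ.integral_mul_cexp_mul_add hX hZ (F := fun x => (x : ℂ))
    (G := fun _ => 1) (by fun_prop) (by fun_prop) a t
  have hZpart := hXZ.integral_mul_cexp_mul_add hX hZ (F := fun _ => 1)
    (G := fun z => (z : ℂ)) (by fun_prop) (by fun_prop) a t
  simp only [mul_one, one_mul, ← charFun_map_apply hZ, hgauss, hgauss'] at hXpart hZpart
  set A := ∫ ω, cexp ((a * t : ℝ) * X ω * I) ∂μ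
  set B := ∫ ω, (X ω : ℂ) * cexp ((a * t : ℝ) * X ω * I) ∂μ
  have hφ : _root_.charFun (μ.map X) (a * t) = A := by
    rw [charFun_eq_measureTheory_charFun, charFun_map_apply hX]
  have hφ' : deriv (_root_.charFun (μ.map X)) (a * t) = I * B := by
    rw [charFun_eq_measureTheory_charFun, deriv_charFun_of_integrable
      ((integrable_map_measure aestronglyMeasurable_id hX.aemeasurable).2 hX1),
      integral_map hX.aemeasurable (by fun_prop)]
  have hint : ∀ f : Ω → ℝ, Integrable f μ →
      Integrable (fun ω => (f ω : ℂ) * cexp (t * (a * X ω + Z ω : ℝ) * I)) μ := fun f hf =>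
    hf.ofReal.mul_bdd (by fun_prop) (ae_of_all _ fun ω => by
      rw [← ofReal_mul, norm_exp_ofReal_mul_I])
  have hsplit : ∀ ω, ((X ω - a * (a * X ω + Z ω) / (1 + a ^ 2) : ℝ) : ℂ)
        * cexp (t * (a * X ω + Z ω : ℝ) * I)
      = (1 + a ^ 2 : ℂ)⁻¹ * ((X ω : ℂ) * cexp (t * (a * X ω + Z ω : ℝ) * I))
        - (a / (1 + a ^ 2) : ℂ) * ((Z ω : ℂ) * cexp (t * (a * X ω + Z ω : ℝ) * I)) := by
    intro ω
    have : (1 + a ^ 2 : ℂ) ≠ 0 := by norm_cast; positivity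
    push_cast
    field_simp
    ring
  simp_rw [hsplit]
  rw [hφ, hφ', integral_sub ((hint X hX1).const_mul _) ((hint Z hZ1).const_mul _),
    integral_const_mul, integral_const_mul, hXpart, hZpart]
  push_cast [ψ]
  linear_combination (1 + a ^ 2 : ℂ)⁻¹ * ψ * B * I_sq

theorem integral_sub_mul_comp_of_condExp_comap_eq [IsFiniteMeasure μ] {Y : Ω → ℝ}
    (hY : Measurable Y) (hX : Integrable X μ) {g L : ℝ → ℝ} (hL : Measurable L)
    (hL1 : Integrable (fun ω => L (Y ω)) μ)
    (hcond : μ[X | MeasurableSpace.comap Y inferInstance] =ᵐ[μ] fun ω => g (Y ω))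
    {h : ℝ → ℂ} (hh : Measurable h) {C : ℝ} (hC : ∀ y, ‖h y‖ ≤ C) :
    ∫ ω, ((g (Y ω) - L (Y ω) : ℝ) : ℂ) * h (Y ω) ∂μ
      = ∫ ω, ((X ω - L (Y ω) : ℝ) : ℂ) * h (Y ω) ∂μ := by
  have hYcomap : Measurable[MeasurableSpace.comap Y inferInstance] Y := comap_measurable Y
  have hres : μ[fun ω => X ω - L (Y ω) | MeasurableSpace.comap Y inferInstance]
      =ᵐ[μ] fun ω => g (Y ω) - L (Y ω) :=
    (condExp_sub hX hL1 _).trans (hcond.sub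
      (.of_eq (condExp_of_stronglyMeasurable hY.comap_le (hL.comp hYcomap).stronglyMeasurable hL1)))
  have horth := integral_condExp_smul_of_bound hY.comap_le (c := fun ω => h (Y ω))
    (hh.comp hYcomap).stronglyMeasurable
    (ae_of_all _ fun ω => hC (Y ω)) (f := fun ω => X ω - L (Y ω)) (hX.sub hL1)
  simp only [real_smul] at horth
  rw [← horth]
  exact integral_congr_ae (hres.mono fun ω hω => by simp only [hω])

lemma integral_abs_le_sqrt_integral_abs_sq [IsProbabilityMeasure μ] {f : Ω → ℝ}
    (hf : MemLp f 2 μ) : ∫ ω, |f ω| ∂μ ≤ √(∫ ω, |f ω| ^ 2 ∂μ) := by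
  refine Real.le_sqrt_of_sq_le ?_
  have hvar := variance_eq_sub hf.norm
  have hvar_nonneg := variance_nonneg (fun ω => ‖f ω‖) μ
  simp only [Real.norm_eq_abs, Pi.pow_apply] at hvar hvar_nonneg
  linarith

lemma norm_integral_ofReal_mul_cexp_le [IsProbabilityMeasure μ] {f Y : Ω → ℝ}
    (hf : MemLp f 2 μ) (t : ℝ) :
    ‖∫ ω, (f ω : ℂ) * cexp (t * Y ω * I) ∂μ‖ ≤ √(∫ ω, |f ω| ^ 2 ∂μ) := by
  refine (norm_integral_le_integral_norm _).trans_eq (integral_congr_ae (ae_of_all _ fun ω => ?_))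
    |>.trans (integral_abs_le_sqrt_integral_abs_sq hf)
  simp only [norm_mul, ← ofReal_mul, norm_exp_ofReal_mul_I, mul_one, norm_real, Real.norm_eq_abs]

end

theorem ode_bound_from_mmse_gap_general {Ω : Type*} [MeasurableSpace Ω] (μ : Measure Ω)
    [IsProbabilityMeasure μ] (X Z : Ω → ℝ) (hX : Measurable X) (hZ : Measurable Z)
    (hindep : IndepFun X Z μ) (hZlaw : μ.map Z = gaussianReal 0 1)
    (hvar : (∫ ω, X ω ^ 2 ∂μ) = 1)
    (γ ε : ℝ) (hγ : 0 < γ)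
    (Y : Ω → ℝ) (hY : Y = fun ω => Real.sqrt γ * X ω + Z ω)
    (g : ℝ → ℝ)
    (hcond : μ[X | MeasurableSpace.comap Y inferInstance] =ᵐ[μ] fun ω => g (Y ω))
    (hmmse : (∫ ω, |g (Y ω) - Real.sqrt γ * Y ω / (1 + γ)| ^ 2 ∂μ) ≤ ε) :
    ∀ u : ℝ, Real.exp (-u ^ 2 / (2 * γ))
        * ‖deriv (_root_.charFun (μ.map X)) u + (u : ℂ) * _root_.charFun (μ.map X) u‖
      ≤ (1 + γ) * Real.sqrt ε := by
  intro u
  have hYm : Measurable Y := hY ▸ by fun_prop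
  have hX2 : MemLp X 2 μ := (memLp_two_iff_integrable_sq hX.aestronglyMeasurable).2
    (Integrable.of_integral_ne_zero (hvar ▸ one_ne_zero))
  have hX1 : Integrable X μ := hX2.integrable one_le_two
  have hL2 : MemLp (fun ω => √γ * Y ω / (1 + γ)) 2 μ := by
    have hY2 : MemLp Y 2 μ :=
      hY ▸ (hX2.const_mul _).add (memLp_of_map_eq_gaussianReal hZ hZlaw 2)
    simpa only [mul_div_right_comm] using hY2.const_mul (√γ / (1 + γ))
  set t := u / √γ
  have horth := integral_sub_mul_comp_of_condExp_comap_eq hYm hX1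
    (L := fun y => √γ * y / (1 + γ)) (by fun_prop) (hL2.integrable one_le_two) hcond
    (h := fun y => cexp (t * y * I)) (by fun_prop) (C := 1)
    (fun y => by rw [← ofReal_mul, norm_exp_ofReal_mul_I])
  have hchan := integral_sub_linear_mul_cexp_gaussian_channel hX hZ hindep hZlaw hX1 hY t
  rw [Real.sq_sqrt hγ.le, mul_div_cancel₀ u (Real.sqrt_pos.2 hγ).ne'] at hchan
  have ht : -t ^ 2 / 2 = -u ^ 2 / (2 * γ) := by
    rw [div_pow, Real.sq_sqrt hγ.le]
    ring
  calc Real.exp (-u ^ 2 / (2 * γ))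
        * ‖deriv (_root_.charFun (μ.map X)) u + (u : ℂ) * _root_.charFun (μ.map X) u‖
      = (1 + γ) * ‖∫ ω, ((g (Y ω) - √γ * Y ω / (1 + γ) : ℝ) : ℂ) * cexp (t * Y ω * I) ∂μ‖ := by
        rw [horth, hchan, norm_mul, norm_mul, norm_neg, norm_I, one_mul, norm_real,
          Real.norm_of_nonneg (by positivity), ht]
        field_simp
    _ ≤ (1 + γ) * √ε := by
        gcongr
        exact (norm_integral_ofReal_mul_cexp_le
          (((hX2.condExp one_le_two).ae_eq hcond).sub hL2) t).trans (Real.sqrt_le_sqrt hmmse)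

theorem ode_bound_from_mmse_gap {Ω : Type*} [MeasurableSpace Ω] (μ : Measure Ω)
    [IsProbabilityMeasure μ] (X Z : Ω → ℝ) (hX : Measurable X) (hZ : Measurable Z)
    (hindep : IndepFun X Z μ) (hZlaw : μ.map Z = gaussianReal 0 1)
    (hmean : (∫ ω, X ω ∂μ) = 0) (hvar : (∫ ω, X ω ^ 2 ∂μ) = 1)
    (γ ε : ℝ) (hγ : 0 < γ) (hε : 0 < ε)
    (Y : Ω → ℝ) (hY : Y = fun ω => Real.sqrt γ * X ω + Z ω)
    (g : ℝ → ℝ) (hg : Measurable g)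
    (hcond : μ[X | MeasurableSpace.comap Y inferInstance] =ᵐ[μ] fun ω => g (Y ω))
    (hmmse : (∫ ω, |g (Y ω) - Real.sqrt γ * Y ω / (1 + γ)| ^ 2 ∂μ) ≤ ε) :
    ∀ u : ℝ, Real.exp (-u ^ 2 / (2 * γ))
        * ‖deriv (_root_.charFun (μ.map X)) u + (u : ℂ) * _root_.charFun (μ.map X) u‖
      ≤ (1 + γ) * Real.sqrt ε :=
  ode_bound_from_mmse_gap_general μ X Z hX hZ hindep hZlaw hvar γ ε hγ Y hY g hcond hmmse
end

section
/- Let X and Z be independent real random variables, Z ~ N(0,1). If the KL divergence D(N(0,1) ‖ P_X * N(0,1)) ≤ 2ε with 0 < ε ≤ 1, then P[|X| > ε^{1/8}] ≤ 108·ε^{1/8}. -/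
open MeasureTheory ProbabilityTheory Real

/-- Kullback-Leibler divergence (in nats). -/
noncomputable def klDiv {α : Type*} [MeasurableSpace α] (P Q : Measure α) : ℝ :=
  ∫ x, Real.log ((P.rnDeriv Q x).toReal) ∂P

/-!
Write `N = N(0,1)`, `Q = P_X * N` and `t = dN/dQ`. The pointwise bound
`1 - t ≤ klFun t / c + c / 2` integrates to `N(A) - Q(A) ≤ D(N‖Q) / c + c / 2`, which is at
most `2√ε` for `c = 2√ε`. On the other hand `Q(A) = E[N(A - X)]`, and for the window
`A = [-δ, δ]` the mass `N(A - x)` is largest at `x = 0` and falls short of `N(A)` by at least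
`δ³/2` once `|x| ≥ 3δ`.
Hence `δ³/2 · P[|X| > 3δ] ≤ 2√ε`, and `δ = ε^{1/8}/3` gives the claim.

Since `klDiv` is a Bochner integral, it is `0` when `llr N Q` is not integrable; integrability
holds because the density of `Q` lies between `φ(|x| + R) · P_X[|X| ≤ R]` and `sup φ`.
-/

open Set Metric
open scoped ENNReal
open InformationTheory (klFun)

lemma sq_div_two_le_klFun {t : ℝ} (ht0 : 0 ≤ t) (ht1 : t ≤ 1) : (1 - t) ^ 2 / 2 ≤ klFun t := by
  rcases ht0.eq_or_lt with rfl | ht0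
  · norm_num [InformationTheory.klFun_zero]
  have hsinh : (t - t⁻¹) / 2 ≤ log t := by
    rw [← sinh_log ht0]
    exact sinh_le_self_iff.mpr (log_nonpos ht0.le ht1)
  have : (t ^ 2 - 1) / 2 ≤ t * log t := by
    have := mul_le_mul_of_nonneg_left hsinh ht0.le
    rwa [mul_div_assoc', mul_sub, mul_inv_cancel₀ ht0.ne', ← sq] at this
  rw [InformationTheory.klFun_apply]
  nlinarith

lemma one_sub_le_klFun_div_add {t c : ℝ} (ht : 0 ≤ t) (hc : 0 < c) :
    1 - t ≤ klFun t / c + c / 2 := by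
  rcases le_total t 1 with ht1 | ht1
  · have := sq_div_two_le_klFun ht ht1
    rw [div_add_div _ _ hc.ne' two_ne_zero, le_div_iff₀ (by positivity)]
    nlinarith [sq_nonneg (1 - t - c)]
  · have := InformationTheory.klFun_nonneg ht
    have : 0 ≤ klFun t / c + c / 2 := by positivity
    linarith

lemma measureReal_sub_le_klDiv_div_add {α : Type*} [MeasurableSpace α] {μ ν : Measure α}
    [IsProbabilityMeasure μ] [IsProbabilityMeasure ν] (hμν : μ ≪ ν)
    (h_int : Integrable (llr μ ν) μ) {s : Set α} (hs : MeasurableSet s) {c : ℝ} (hc : 0 < c) :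
    μ.real s - ν.real s ≤ klDiv μ ν / c + c / 2 := by
  set t := fun x ↦ (μ.rnDeriv ν x).toReal
  have ht_int : Integrable t ν := Measure.integrable_toReal_rnDeriv
  have hklFun_int : Integrable (fun x ↦ klFun (t x) / c) ν :=
    ((InformationTheory.integrable_klFun_rnDeriv_iff hμν).mpr h_int).div_const c
  have hbound_int : Integrable (fun x ↦ klFun (t x) / c + c / 2) ν :=
    hklFun_int.add (integrable_const _)
  calc μ.real s - ν.real s = ∫ x in sᶜ, (1 - t x) ∂ν := by
        rw [integral_sub (integrable_const _) ht_int.integrableOn,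
          Measure.setIntegral_toReal_rnDeriv hμν, setIntegral_const, smul_eq_mul, mul_one,
          measureReal_compl hs, measureReal_compl hs]
        simp
    _ ≤ ∫ x in sᶜ, (klFun (t x) / c + c / 2) ∂ν :=
        setIntegral_mono (integrable_const _ |>.sub ht_int).integrableOn hbound_int.integrableOn
          fun x ↦ one_sub_le_klFun_div_add ENNReal.toReal_nonneg hc
    _ ≤ ∫ x, (klFun (t x) / c + c / 2) ∂ν :=
        setIntegral_le_integral hbound_int <| .of_forall fun x ↦
          add_nonneg (div_nonneg (InformationTheory.klFun_nonneg ENNReal.toReal_nonneg) hc.le)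
            (by positivity)
    _ = klDiv μ ν / c + c / 2 := by
        rw [integral_add hklFun_int (integrable_const _),
          integral_div, InformationTheory.integral_klFun_rnDeriv hμν h_int]
        simp [klDiv, llr]

local notation "φ" => gaussianPDFReal 0 1

lemma gaussianPDFReal_zero_one (x : ℝ) : φ x = (√(2 * π))⁻¹ * exp (-x ^ 2 / 2) := by
  simp [gaussianPDFReal]

lemma gaussianPDFReal_zero_one_le_of_abs_le {x y : ℝ} (h : |x| ≤ |y|) : φ y ≤ φ x := by
  simp only [gaussianPDFReal_zero_one]
  have := sq_le_sq.mpr h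
  gcongr ?_ * exp ?_
  linarith

lemma sq_div_four_le_gaussianPDFReal_sub {δ : ℝ} (hδ : δ ^ 2 ≤ 1 / 9) :
    δ ^ 2 / 4 ≤ φ δ - φ (2 * δ) := by
  have hc : 1 / 4 ≤ (√(2 * π))⁻¹ := by
    rw [one_div, inv_le_inv₀ (by norm_num) (by positivity), sqrt_le_left (by norm_num)]
    linarith [pi_le_four]
  have hexp : exp (-(2 * δ) ^ 2 / 2) * (1 + 3 * δ ^ 2 / 2) ≤ exp (-δ ^ 2 / 2) := by
    calc exp (-(2 * δ) ^ 2 / 2) * (1 + 3 * δ ^ 2 / 2)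
        ≤ exp (-(2 * δ) ^ 2 / 2) * exp (3 * δ ^ 2 / 2) := by
          gcongr; linarith [add_one_le_exp (3 * δ ^ 2 / 2)]
      _ = exp (-δ ^ 2 / 2) := by rw [← exp_add]; ring_nf
  have hexp' : 1 - 2 * δ ^ 2 ≤ exp (-(2 * δ) ^ 2 / 2) := by
    linarith [add_one_le_exp (-(2 * δ) ^ 2 / 2)]
  rw [gaussianPDFReal_zero_one, gaussianPDFReal_zero_one, ← mul_sub]
  calc δ ^ 2 / 4 ≤ 1 / 4 * ((1 - 2 * δ ^ 2) * (3 * δ ^ 2 / 2)) := by nlinarith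
    _ ≤ (√(2 * π))⁻¹ * (exp (-(2 * δ) ^ 2 / 2) * (3 * δ ^ 2 / 2)) := by
        gcongr
        nlinarith
    _ ≤ _ := by gcongr; linarith

lemma gaussianReal_real_Icc {a b : ℝ} (hab : a ≤ b) :
    (gaussianReal 0 1).real (Icc a b) = ∫ x in a..b, φ x := by
  rw [measureReal_def, gaussianReal_apply_eq_integral 0 one_ne_zero,
    ENNReal.toReal_ofReal (setIntegral_nonneg measurableSet_Icc fun x _ ↦
      gaussianPDFReal_nonneg 0 1 x),
    integral_Icc_eq_integral_Ioc, intervalIntegral.integral_of_le hab]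

lemma gaussianReal_real_Icc_le {δ : ℝ} (hδ : 0 ≤ δ) (c : ℝ) :
    (gaussianReal 0 1).real (Icc (c - δ) (c + δ)) ≤ (gaussianReal 0 1).real (Icc (-δ) δ) := by
  wlog hc : 0 ≤ c generalizing c
  · have hneg : (gaussianReal 0 1).real (Icc (c - δ) (c + δ))
        = (gaussianReal 0 1).real (Icc (-c - δ) (-c + δ)) := by
      have hsymm : gaussianReal 0 1 = (gaussianReal 0 1).map (fun x ↦ -x) := by
        rw [gaussianReal_map_neg, neg_zero]
      conv_lhs => rw [hsymm, map_measureReal_apply measurable_neg measurableSet_Icc]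
      congr 1
      ext x; simp only [mem_preimage, mem_Icc]; constructor <;> intro h <;> constructor <;> linarith
    exact hneg ▸ this (-c) (by linarith)
  have hint : ∀ a b : ℝ, IntervalIntegrable φ volume a b := fun a b ↦
    (integrable_gaussianPDFReal 0 1).intervalIntegrable
  rw [gaussianReal_real_Icc (by linarith), gaussianReal_real_Icc (by linarith),
    ← intervalIntegral.integral_add_adjacent_intervals (hint (c - δ) δ) (hint δ (c + δ)),
    ← intervalIntegral.integral_add_adjacent_intervals (hint (-δ) (c - δ)) (hint (c - δ) δ),
    add_comm, add_le_add_iff_right]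
  -- translating `[δ, c + δ]` by `-2δ` moves every point closer to the origin
  have hshift : ∫ x in δ..c + δ, φ x = ∫ x in -δ..c - δ, φ (x + 2 * δ) := by
    rw [intervalIntegral.integral_comp_add_right]; ring_nf
  rw [hshift]
  refine intervalIntegral.integral_mono_on (by linarith)
    ((integrable_gaussianPDFReal 0 1).comp_add_right _).intervalIntegrable (hint _ _)
    fun x hx ↦ gaussianPDFReal_zero_one_le_of_abs_le ?_
  rw [abs_of_nonneg (by linarith [hx.1] : 0 ≤ x + 2 * δ)]
  exact abs_le.mpr ⟨by linarith [hx.1], by linarith⟩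

lemma gaussianReal_real_Icc_add_le_of_far {δ c : ℝ} (hδ0 : 0 < δ) (hδ : δ ≤ 1 / 3)
    (hc : 3 * δ ≤ |c|) :
    (gaussianReal 0 1).real (Icc (c - δ) (c + δ)) + δ ^ 3 / 2
      ≤ (gaussianReal 0 1).real (Icc (-δ) δ) := by
  have hint : ∀ a b : ℝ, IntervalIntegrable φ volume a b := fun a b ↦
    (integrable_gaussianPDFReal 0 1).intervalIntegrable
  have hfar : ∫ x in c - δ..c + δ, φ x ≤ ∫ _ in c - δ..c + δ, φ (2 * δ) :=
    intervalIntegral.integral_mono_on (by linarith) (hint _ _) intervalIntegrable_const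
      fun x hx ↦ gaussianPDFReal_zero_one_le_of_abs_le <| by
        rw [abs_of_pos (by positivity)]
        cases abs_cases c <;> cases abs_cases x <;> linarith [hx.1, hx.2]
  have hnear : ∫ _ in -δ..δ, φ δ ≤ ∫ x in -δ..δ, φ x :=
    intervalIntegral.integral_mono_on (by linarith) intervalIntegrable_const (hint _ _)
      fun x hx ↦ gaussianPDFReal_zero_one_le_of_abs_le <| by
        rw [abs_of_pos hδ0]; exact abs_le.mpr hx
  have hgap := sq_div_four_le_gaussianPDFReal_sub (δ := δ) (by nlinarith)
  rw [gaussianReal_real_Icc (by linarith), gaussianReal_real_Icc (by linarith)]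
  simp only [intervalIntegral.integral_const, smul_eq_mul] at hfar hnear
  nlinarith

lemma log_gaussianPDFReal_zero_one (x : ℝ) :
    log (φ x) = log (√(2 * π))⁻¹ - x ^ 2 / 2 := by
  rw [gaussianPDFReal_zero_one, log_mul (by positivity) (exp_pos _).ne', log_exp]
  ring

lemma abs_log_gaussianPDFReal_div_le {x R m q : ℝ} (hm : 0 < m) (hq_lo : φ (|x| + R) * m ≤ q)
    (hq_hi : q ≤ (√(2 * π))⁻¹) :
    |log (φ x / q)| ≤ x ^ 2 + (R ^ 2 + |log m|) := by
  have hφ_pos (y : ℝ) : 0 < φ y := gaussianPDFReal_pos 0 1 y one_ne_zero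
  have hq : 0 < q := (mul_pos (hφ_pos _) hm).trans_le hq_lo
  have h_hi : log q ≤ log (√(2 * π))⁻¹ := log_le_log hq hq_hi
  have h_lo : log (√(2 * π))⁻¹ - (|x| + R) ^ 2 / 2 + log m ≤ log q := by
    have := log_le_log (mul_pos (hφ_pos _) hm) hq_lo
    rwa [log_mul (hφ_pos _).ne' hm.ne', log_gaussianPDFReal_zero_one] at this
  have hsq : (|x| + R) ^ 2 ≤ 2 * x ^ 2 + 2 * R ^ 2 := by
    nlinarith [sq_nonneg (|x| - R), sq_abs x]
  rw [log_div (hφ_pos x).ne' hq.ne', log_gaussianPDFReal_zero_one, abs_le]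
  constructor <;> nlinarith [neg_abs_le (log m), le_abs_self (log m), sq_nonneg x, sq_nonneg R]

noncomputable def gaussianConvDensity (P : Measure ℝ) (x : ℝ) : ℝ≥0∞ :=
  ∫⁻ t, gaussianPDF 0 1 (x - t) ∂P

section GaussianConvDensity

variable (P : Measure ℝ)

lemma measurable_gaussianConvDensity [SFinite P] : Measurable (gaussianConvDensity P) :=
  Measurable.lintegral_prod_right (by fun_prop)

lemma conv_gaussianReal_apply [SFinite P] {s : Set ℝ} (hs : MeasurableSet s) :
    (P ∗ gaussianReal 0 1) s = ∫⁻ t, gaussianReal 0 1 ((t + ·) ⁻¹' s) ∂P := by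
  rw [Measure.conv, Measure.map_apply measurable_add hs,
    Measure.prod_apply (measurable_add hs)]
  rfl

lemma conv_gaussianReal_eq_withDensity [SFinite P] :
    P ∗ gaussianReal 0 1 = volume.withDensity (gaussianConvDensity P) := by
  ext s hs
  have htranslate (t : ℝ) :
      gaussianReal 0 1 ((t + ·) ⁻¹' s) = ∫⁻ x in s, gaussianPDF 0 1 (x - t) := by
    rw [← Measure.map_apply (measurable_const_add t) hs, gaussianReal_map_const_add, zero_add,
      gaussianReal_apply _ one_ne_zero]
    simp [gaussianPDF, gaussianPDFReal_sub (μ := 0)]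
  simp_rw [conv_gaussianReal_apply P hs, withDensity_apply _ hs, gaussianConvDensity, htranslate]
  exact lintegral_lintegral_swap (by fun_prop)

lemma le_gaussianConvDensity (R x : ℝ) :
    ENNReal.ofReal (φ (|x| + R)) * P (closedBall 0 R) ≤ gaussianConvDensity P x := by
  calc ENNReal.ofReal (φ (|x| + R)) * P (closedBall 0 R)
      = ∫⁻ _ in closedBall 0 R, ENNReal.ofReal (φ (|x| + R)) ∂P := (setLIntegral_const _ _).symm
    _ ≤ ∫⁻ t in closedBall 0 R, gaussianPDF 0 1 (x - t) ∂P :=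
        setLIntegral_mono' measurableSet_closedBall fun t ht ↦ ENNReal.ofReal_le_ofReal <|
          gaussianPDFReal_zero_one_le_of_abs_le <| by
            rw [mem_closedBall_zero_iff, Real.norm_eq_abs] at ht
            rw [abs_of_nonneg (a := |x| + R) (by linarith [abs_nonneg x, abs_nonneg t])]
            linarith [abs_sub x t]
    _ ≤ gaussianConvDensity P x := setLIntegral_le_lintegral _ _

lemma exists_measure_closedBall_ne_zero [NeZero P] : ∃ R : ℝ, P (closedBall 0 R) ≠ 0 := by
  by_contra! h
  have := measure_iUnion_null (μ := P) fun n : ℕ ↦ h n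
  rw [iUnion_closedBall_nat] at this
  exact NeZero.ne P (Measure.measure_univ_eq_zero.mp this)

variable [IsProbabilityMeasure P]

lemma gaussianConvDensity_le (x : ℝ) :
    gaussianConvDensity P x ≤ ENNReal.ofReal (√(2 * π))⁻¹ := by
  calc gaussianConvDensity P x ≤ ∫⁻ _, ENNReal.ofReal (√(2 * π))⁻¹ ∂P :=
        lintegral_mono fun t ↦ ENNReal.ofReal_le_ofReal <| by
          simpa [gaussianPDFReal_zero_one] using gaussianPDFReal_zero_one_le_of_abs_le
            (x := 0) (y := x - t) (by simp)
    _ = _ := by simp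

lemma gaussianConvDensity_ne_zero (x : ℝ) : gaussianConvDensity P x ≠ 0 := by
  obtain ⟨R, hR⟩ := exists_measure_closedBall_ne_zero P
  refine (lt_of_lt_of_le ?_ (le_gaussianConvDensity P R x)).ne'
  exact ENNReal.mul_pos (ENNReal.ofReal_pos.mpr (gaussianPDFReal_pos 0 1 _ one_ne_zero)).ne' hR

lemma gaussianConvDensity_ne_top (x : ℝ) : gaussianConvDensity P x ≠ ∞ :=
  ne_top_of_le_ne_top ENNReal.ofReal_ne_top (gaussianConvDensity_le P x)

lemma gaussianReal_absolutelyContinuous_conv : gaussianReal 0 1 ≪ P ∗ gaussianReal 0 1 := by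
  rw [conv_gaussianReal_eq_withDensity]
  exact (gaussianReal_absolutelyContinuous 0 one_ne_zero).trans <|
    withDensity_absolutelyContinuous' (measurable_gaussianConvDensity P).aemeasurable
      (.of_forall (gaussianConvDensity_ne_zero P))

lemma rnDeriv_gaussianReal_conv :
    (gaussianReal 0 1).rnDeriv (P ∗ gaussianReal 0 1)
      =ᵐ[gaussianReal 0 1] fun x ↦ (gaussianConvDensity P x)⁻¹ * gaussianPDF 0 1 x := by
  refine (gaussianReal_absolutelyContinuous 0 one_ne_zero).ae_eq ?_
  rw [conv_gaussianReal_eq_withDensity]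
  filter_upwards [Measure.rnDeriv_withDensity_right (gaussianReal 0 1) volume
    (measurable_gaussianConvDensity P).aemeasurable (.of_forall (gaussianConvDensity_ne_zero P))
    (.of_forall (gaussianConvDensity_ne_top P)), rnDeriv_gaussianReal 0 1] with x hx hφ
  rw [hx, hφ]

lemma integrable_llr_gaussianReal_conv :
    Integrable (llr (gaussianReal 0 1) (P ∗ gaussianReal 0 1)) (gaussianReal 0 1) := by
  obtain ⟨R, hR⟩ := exists_measure_closedBall_ne_zero P
  set m := P.real (closedBall 0 R)
  have hm : 0 < m := ENNReal.toReal_pos hR (measure_ne_top _ _)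
  refine ((memLp_id_gaussianReal' 2 (by norm_num)).integrable_sq.add
    (integrable_const (R ^ 2 + |log m|))).mono' (measurable_llr _ _).aestronglyMeasurable ?_
  filter_upwards [rnDeriv_gaussianReal_conv P] with x hx
  rw [Real.norm_eq_abs, llr, hx, ENNReal.toReal_mul, ENNReal.toReal_inv, toReal_gaussianPDF,
    inv_mul_eq_div]
  refine abs_log_gaussianPDFReal_div_le hm ?_ ?_
  · simpa [m, measureReal_def, ENNReal.toReal_mul,
      ENNReal.toReal_ofReal (gaussianPDFReal_nonneg 0 1 _)] using
      ENNReal.toReal_mono (gaussianConvDensity_ne_top P x) (le_gaussianConvDensity P R x)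
  · exact ENNReal.toReal_le_of_le_ofReal (by positivity) (gaussianConvDensity_le P x)

lemma mul_measureReal_le_sub_conv_gaussianReal {δ : ℝ} (hδ0 : 0 < δ) (hδ : δ ≤ 1 / 3) :
    δ ^ 3 / 2 * P.real {x | 3 * δ < |x|}
      ≤ (gaussianReal 0 1).real (Icc (-δ) δ) - (P ∗ gaussianReal 0 1).real (Icc (-δ) δ) := by
  set A := Icc (-δ) δ
  set G := fun t ↦ (gaussianReal 0 1).real ((t + ·) ⁻¹' A)
  have hG (t : ℝ) : G t = (gaussianReal 0 1).real (Icc (-t - δ) (-t + δ)) := by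
    simp only [G, A, preimage_const_add_Icc]
    congr 2 <;> ring
  have hG_meas : Measurable fun t ↦ gaussianReal 0 1 ((t + ·) ⁻¹' A) :=
    measurable_measure_prodMk_left (measurable_add measurableSet_Icc)
  have hG_int : Integrable G P :=
    .of_bound hG_meas.ennreal_toReal.aestronglyMeasurable 1 <| .of_forall fun t ↦ by
      rw [Real.norm_eq_abs, abs_of_nonneg measureReal_nonneg]
      exact measureReal_le_one
  have hQ : (P ∗ gaussianReal 0 1).real A = ∫ t, G t ∂P := by
    rw [measureReal_def, conv_gaussianReal_apply P measurableSet_Icc,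
      ← integral_toReal hG_meas.aemeasurable (.of_forall fun _ ↦ measure_lt_top _ _)]
    rfl
  have hS : MeasurableSet {x : ℝ | 3 * δ < |x|} := measurableSet_lt measurable_const measurable_abs
  calc δ ^ 3 / 2 * P.real {x | 3 * δ < |x|} = ∫ _ in {x | 3 * δ < |x|}, δ ^ 3 / 2 ∂P := by
        rw [setIntegral_const, smul_eq_mul, mul_comm]
    _ ≤ ∫ t in {x | 3 * δ < |x|}, ((gaussianReal 0 1).real A - G t) ∂P :=
        setIntegral_mono_on (integrable_const _).integrableOn
          ((integrable_const _).sub hG_int).integrableOn hS fun t ht ↦ by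
            have := gaussianReal_real_Icc_add_le_of_far hδ0 hδ (c := -t)
              (by rw [abs_neg]; exact le_of_lt ht)
            rw [hG]
            linarith
    _ ≤ ∫ t, ((gaussianReal 0 1).real A - G t) ∂P :=
        setIntegral_le_integral ((integrable_const _).sub hG_int) <| .of_forall fun t ↦
          sub_nonneg.mpr (hG t ▸ gaussianReal_real_Icc_le hδ0.le (-t))
    _ = (gaussianReal 0 1).real A - (P ∗ gaussianReal 0 1).real A := by
        rw [integral_sub (integrable_const _) hG_int, integral_const, hQ]
        simp

end GaussianConvDensity

theorem concentration_of_small_kl (PX : Measure ℝ) [IsProbabilityMeasure PX]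
    (ε : ℝ) (hε : 0 < ε) (hε1 : ε ≤ 1)
    (hkl : klDiv (gaussianReal 0 1) (PX.conv (gaussianReal 0 1)) ≤ 2 * ε) :
    (PX {x | ε ^ ((1 : ℝ) / 8) < |x|}).toReal ≤ 108 * ε ^ ((1 : ℝ) / 8) := by
  set d := ε ^ ((1 : ℝ) / 8)
  have hd0 : 0 < d := rpow_pos_of_pos hε _
  have hd1 : d ≤ 1 := rpow_le_one hε.le hε1 (by norm_num)
  have hsqrt : √ε = d ^ 4 := by
    rw [sqrt_eq_iff_mul_self_eq hε.le (by positivity), ← pow_add, ← rpow_natCast,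
      ← rpow_mul hε.le]
    norm_num
  have htv : (gaussianReal 0 1).real (Icc (-(d / 3)) (d / 3))
      - (PX ∗ gaussianReal 0 1).real (Icc (-(d / 3)) (d / 3)) ≤ 2 * d ^ 4 := by
    have hkl_div : klDiv (gaussianReal 0 1) (PX ∗ gaussianReal 0 1) / (2 * √ε) ≤ √ε := by
      rw [div_le_iff₀ (by positivity)]
      nlinarith [sq_sqrt hε.le]
    have := measureReal_sub_le_klDiv_div_add (gaussianReal_absolutelyContinuous_conv PX)
      (integrable_llr_gaussianReal_conv PX) (measurableSet_Icc (a := -(d / 3)) (b := d / 3))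
      (c := 2 * √ε) (by positivity)
    linarith
  have hgap := mul_measureReal_le_sub_conv_gaussianReal PX (δ := d / 3) (by positivity)
    (by linarith)
  rw [show 3 * (d / 3) = d by ring] at hgap
  rw [← measureReal_def]
  refine le_of_mul_le_mul_left ?_ (by positivity : 0 < (d / 3) ^ 3 / 2)
  linarith [show (d / 3) ^ 3 / 2 * (108 * d) = 2 * d ^ 4 by ring]
end
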